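/- arXiv:0907.1916 — 3 statements merged into one kernel-verified Lean document; each statement's English description precedes it below -/
import Mathlib

section
/- Every Lyapunov-stable stationary point of the multipopulation replicator dynamics is a Nash equilibrium: if Q* ∈ K satisfies G(Q*) = 0 and Q* is Lyapunov stable for the ODE dQ/dt = G(Q), then Q* is a Nash equilibrium. Equivalently, a stationary point that is not a Nash equilibrium is not Lyapunov stable. -/
open Finset

/-- A point of the standard simplex in `ℝ^M`. -/
def IsSimplex {M : ℕ} (q : Fin M → ℝ) : Prop :=
  (∀ ℓ, 0 ≤ q ℓ) ∧ ∑ ℓ, q ℓ = 1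

/-- A mixed profile: one mixed strategy per player. -/
def InK {n : ℕ} {m : Fin n → ℕ} (Q : ∀ i, Fin (m i) → ℝ) : Prop :=
  ∀ i, IsSimplex (Q i)

/-- The `ℓ`-th unit vector `e_ℓ`. -/
def unitVec {M : ℕ} (ℓ : Fin M) : Fin M → ℝ := fun k => if k = ℓ then 1 else 0

/-- The multilinear (mixed) extension of a function on pure profiles:
`ū(Q) = Σ_s (Π_j q_{j, s_j}) c(s)`. -/
noncomputable def mixedExt {n : ℕ} {m : Fin n → ℕ} (c : (∀ j, Fin (m j)) → ℝ)
    (Q : ∀ i, Fin (m i) → ℝ) : ℝ :=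
  ∑ s : ∀ j, Fin (m j), (∏ j, Q j (s j)) * c s

/-- Nash equilibrium: no player can decrease her expected cost by a unilateral
(mixed) deviation. -/
def IsNash {n : ℕ} {m : Fin n → ℕ} (c : ∀ _i : Fin n, (∀ j, Fin (m j)) → ℝ)
    (Q : ∀ i, Fin (m i) → ℝ) : Prop :=
  ∀ i, ∀ q' : Fin (m i) → ℝ, IsSimplex q' →
    mixedExt (c i) Q ≤ mixedExt (c i) (Function.update Q i q')

/-- The multipopulation replicator vector field:
`G_{i,ℓ}(Q) = -p_i q_{i,ℓ} (ū_i(e_ℓ, Q_{-i}) - ū_i(q_i, Q_{-i}))`. -/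
noncomputable def repl {n : ℕ} {m : Fin n → ℕ} (c : ∀ _i : Fin n, (∀ j, Fin (m j)) → ℝ)
    (p : Fin n → ℝ) (Q : ∀ i, Fin (m i) → ℝ) (i : Fin n) (ℓ : Fin (m i)) : ℝ :=
  -(p i) * Q i ℓ *
    (mixedExt (c i) (Function.update Q i (unitVec ℓ)) - mixedExt (c i) Q)


/-!
If some player `i` has a pure strategy `ℓ` that is strictly cheaper than `Q* i` against `Q*`, it
stays strictly cheaper, by some margin `δ`, on a neighbourhood `U` of `Q*`. Along the replicator
flow `q_{i,ℓ}' = q_{i,ℓ} · (-p_i · gap)`, so while the trajectory stays in `U` the weight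
`q_{i,ℓ}` grows at least like `exp (p_i δ t)`. As `q_{i,ℓ} ≤ 1` on `K`, every trajectory starting
arbitrarily close to `Q*` with `q_{i,ℓ} > 0` has to leave `U`, contradicting stability.

Such trajectories exist for all `t ≥ 0`: `K` is forward invariant, since `q_{i,ℓ}` and
`1 - Σ_ℓ q_{i,ℓ}` solve scalar linear equations, and the field is locally Lipschitz, so
Picard–Lindelöf steps of a length that is uniform on `K` can be concatenated.
-/

open Set Filter Topology Metric
open scoped NNReal

section LinearScalarODE

variable {a b : ℝ} {g q : ℝ → ℝ}

theorem eq_mul_exp_integral_of_hasDerivWithinAt_mul (hab : a ≤ b)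
    (hg : ContinuousOn g (Icc a b))
    (hq : ∀ t ∈ Icc a b, HasDerivWithinAt q (q t * g t) (Icc a b) t) :
    ∀ t ∈ Icc a b,
      q t = q a * Real.exp (∫ s in a..t, IccExtend hab (fun u : Icc a b => g u) s) := by
  set G : ℝ → ℝ := IccExtend hab (fun u : Icc a b => g u)
  have hG : Continuous G :=
    continuous_IccExtend_iff.mpr (continuousOn_iff_continuous_domRestrict.mp hg)
  set A : ℝ → ℝ := fun t => ∫ s in a..t, G s
  have hA (t : ℝ) : HasDerivAt A (G t) t :=
    intervalIntegral.integral_hasDerivAt_right (hG.intervalIntegrable _ _)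
      (hG.stronglyMeasurableAtFilter _ _) hG.continuousAt
  -- `q · exp (-A)` has zero derivative, hence is constant.
  have hderiv : ∀ t ∈ Icc a b,
      HasDerivWithinAt (fun u => q u * Real.exp (-A u)) 0 (Icc a b) t := by
    intro t ht
    refine ((hq t ht).mul ((hA t).neg.exp.hasDerivWithinAt)).congr_deriv ?_
    rw [show G t = g t from IccExtend_of_mem hab _ ht]
    ring
  have hcont : ContinuousOn (fun u => q u * Real.exp (-A u)) (Icc a b) :=
    ContinuousOn.mul (fun t ht => (hq t ht).continuousWithinAt)
      (continuous_iff_continuousAt.2 fun t => (hA t).continuousAt).neg.rexp.continuousOn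
  have hconst := constant_of_has_deriv_right_zero hcont fun t ht =>
    (hderiv t (Ico_subset_Icc_self ht)).mono_of_mem_nhdsWithin (Icc_mem_nhdsGE_of_mem ht)
  intro t ht
  have hAa : A a = 0 := intervalIntegral.integral_same
  have h := hconst t ht
  rw [hAa, neg_zero, Real.exp_zero, mul_one] at h
  rw [← h, mul_assoc, ← Real.exp_add, neg_add_cancel, Real.exp_zero, mul_one]

theorem eq_zero_of_hasDerivWithinAt_mul (hab : a ≤ b) (hg : ContinuousOn g (Icc a b))
    (hq : ∀ t ∈ Icc a b, HasDerivWithinAt q (q t * g t) (Icc a b) t) (ha : q a = 0) :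
    ∀ t ∈ Icc a b, q t = 0 := fun t ht => by
  rw [eq_mul_exp_integral_of_hasDerivWithinAt_mul hab hg hq t ht, ha, zero_mul]

theorem nonneg_of_hasDerivWithinAt_mul (hab : a ≤ b) (hg : ContinuousOn g (Icc a b))
    (hq : ∀ t ∈ Icc a b, HasDerivWithinAt q (q t * g t) (Icc a b) t) (ha : 0 ≤ q a) :
    ∀ t ∈ Icc a b, 0 ≤ q t := fun t ht => by
  rw [eq_mul_exp_integral_of_hasDerivWithinAt_mul hab hg hq t ht]
  positivity

theorem mul_exp_le_of_hasDerivWithinAt_mul {k : ℝ} (hab : a ≤ b)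
    (hg : ContinuousOn g (Icc a b))
    (hq : ∀ t ∈ Icc a b, HasDerivWithinAt q (q t * g t) (Icc a b) t) (ha : 0 ≤ q a)
    (hk : ∀ t ∈ Icc a b, k ≤ g t) :
    ∀ t ∈ Icc a b, q a * Real.exp (k * (t - a)) ≤ q t := by
  intro t ht
  rw [eq_mul_exp_integral_of_hasDerivWithinAt_mul hab hg hq t ht]
  have hG : Continuous (IccExtend hab fun u : Icc a b => g u) :=
    continuous_IccExtend_iff.mpr (continuousOn_iff_continuous_domRestrict.mp hg)
  have hint : ∫ _ in a..t, k ≤ ∫ s in a..t, IccExtend hab (fun u : Icc a b => g u) s := by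
    refine intervalIntegral.integral_mono_on ht.1 intervalIntegrable_const
      (hG.intervalIntegrable _ _) fun s hs => ?_
    have hs' : s ∈ Icc a b := ⟨hs.1, hs.2.trans ht.2⟩
    rw [IccExtend_of_mem hab _ hs']
    exact hk s hs'
  rw [intervalIntegral.integral_const, smul_eq_mul, mul_comm] at hint
  gcongr

end LinearScalarODE

section IntegralCurves

variable {E : Type*} [NormedAddCommGroup E] [NormedSpace ℝ E]

theorem LocallyLipschitz.exists_pos_forall_exists_isIntegralCurveOn_Icc [ProperSpace E]
    {v : E → E} (hv : LocallyLipschitz v) (R : ℝ≥0) :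
    ∃ τ > 0, ∀ (a : ℝ), ∀ x ∈ closedBall (0 : E) R, ∃ f : ℝ → E, f a = x ∧
      IsIntegralCurveOn f (fun _ => v) (Icc a (a + τ)) := by
  have hB : IsCompact (closedBall (0 : E) (R + 1)) := isCompact_closedBall _ _
  obtain ⟨K, hK⟩ := hv.locallyLipschitzOn.exists_lipschitzOnWith_of_compact hB
  obtain ⟨L, hL⟩ := hB.exists_bound_of_continuousOn hv.continuous.continuousOn
  refine ⟨1 / (L.toNNReal + 1), by positivity, fun a x hx => ?_⟩
  have hPL : IsPicardLindelof (fun _ => v) (tmin := a) (tmax := a + 1 / (L.toNNReal + 1))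
      ⟨a, le_rfl, le_add_of_nonneg_right (by positivity)⟩ 0 (R + 1) R L.toNNReal K := by
    refine .of_time_independent
      (fun y hy => (hL y (by simpa using hy)).trans (Real.le_coe_toNNReal L)) (by simpa using hK) ?_
    rw [add_sub_cancel_left, sub_self, max_eq_left (by positivity), mul_one_div]
    push_cast
    rw [add_sub_cancel_left, div_le_one (by positivity)]
    exact le_add_of_nonneg_right zero_le_one
  exact hPL.exists_eq_forall_mem_Icc_hasDerivWithinAt hx

theorem IsIntegralCurveOn.Icc_ite {f g : ℝ → E} {v : ℝ → E → E} {a b c : ℝ} (hab : a ≤ b)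
    (hbc : b ≤ c) (hf : IsIntegralCurveOn f v (Icc a b)) (hg : IsIntegralCurveOn g v (Icc b c))
    (hfg : f b = g b) :
    IsIntegralCurveOn (fun t => if t ≤ b then f t else g t) v (Icc a c) := by
  set h : ℝ → E := fun t => if t ≤ b then f t else g t
  have hf_eq : EqOn h f (Icc a b) := fun t ht => if_pos ht.2
  have hg_eq : EqOn h g (Icc b c) := fun t ht => by
    rcases ht.1.eq_or_lt with rfl | hbt
    · exact (if_pos le_rfl).trans hfg
    · exact if_neg hbt.not_ge
  intro t ht
  rw [← Icc_union_Icc_eq_Icc hab hbc]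
  -- Off the closure of a piece, the derivative within that piece holds vacuously.
  refine .union ?_ ?_
  · by_cases htb : t ≤ b
    · have htab : t ∈ Icc a b := ⟨ht.1, htb⟩
      rw [hf_eq htab]
      exact (hf t htab).congr hf_eq (hf_eq htab)
    · exact HasFDerivWithinAt.of_notMem_closure (by simp [closure_Icc, htb])
  · by_cases hbt : b ≤ t
    · have htbc : t ∈ Icc b c := ⟨hbt, ht.2⟩
      rw [hg_eq htbc]
      exact (hg t htbc).congr hg_eq (hg_eq htbc)
    · exact HasFDerivWithinAt.of_notMem_closure (by simp [closure_Icc, hbt])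

theorem exists_seq_isIntegralCurveOn_Icc_of_forall_exists_Icc {v : ℝ → E → E} {S : Set E}
    {τ : ℝ} (hτ : 0 ≤ τ)
    (hstep : ∀ a, ∀ x ∈ S, ∃ f : ℝ → E, f a = x ∧
      IsIntegralCurveOn f v (Icc a (a + τ)) ∧ MapsTo f (Icc a (a + τ)) S)
    {x : E} (hx : x ∈ S) :
    ∃ F : ℕ → ℝ → E, F 0 0 = x ∧ (∀ k j : ℕ, k ≤ j → ∀ t ≤ k * τ, F j t = F k t) ∧
      ∀ k, IsIntegralCurveOn (F k) v (Icc 0 (k * τ)) ∧ MapsTo (F k) (Icc 0 (k * τ)) S := by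
  choose! φ hφ₀ hφ hφS using hstep
  -- `F (k + 1)` extends `F k` from `[0, k τ]` by one step of length `τ`.
  let F : ℕ → ℝ → E := fun k => Nat.rec (fun _ => x)
    (fun k Fk t => if t ≤ k * τ then Fk t else φ (k * τ) (Fk (k * τ)) t) k
  refine ⟨F, rfl, fun k j hkj t ht => ?_, fun k => ?_⟩
  · induction j, hkj using Nat.le_induction with
    | base => rfl
    | succ j hkj ih => exact (if_pos (ht.trans (by gcongr))).trans ih
  induction k with
  | zero =>
    simp only [CharP.cast_eq_zero, zero_mul, Set.Icc_self]
    refine ⟨fun t ht => ?_, fun t ht => hx⟩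
    rw [mem_singleton_iff.1 ht, ← hasDerivWithinAt_sdiff_singleton, Set.sdiff_self]
    exact HasFDerivWithinAt.of_notMem_closure (by simp)
  | succ k ih =>
    have hkτ : (0 : ℝ) ≤ k * τ := by positivity
    have hS : F k (k * τ) ∈ S := ih.2 ⟨hkτ, le_rfl⟩
    rw [Nat.cast_succ, add_one_mul]
    refine ⟨ih.1.Icc_ite hkτ (by linarith) (hφ _ _ hS) (hφ₀ _ _ hS).symm, fun t ht => ?_⟩
    by_cases htk : t ≤ k * τ
    · rw [show F (k + 1) t = F k t from if_pos htk]
      exact ih.2 ⟨ht.1, htk⟩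
    · rw [show F (k + 1) t = φ (k * τ) (F k (k * τ)) t from if_neg htk]
      exact hφS _ _ hS ⟨le_of_not_ge htk, ht.2⟩

theorem exists_isIntegralCurveOn_Ici_of_forall_exists_Icc {v : ℝ → E → E} {S : Set E} {τ : ℝ}
    (hτ : 0 < τ)
    (hstep : ∀ a, ∀ x ∈ S, ∃ f : ℝ → E, f a = x ∧
      IsIntegralCurveOn f v (Icc a (a + τ)) ∧ MapsTo f (Icc a (a + τ)) S)
    {x : E} (hx : x ∈ S) :
    ∃ f : ℝ → E, f 0 = x ∧ IsIntegralCurveOn f v (Ici 0) ∧ MapsTo f (Ici 0) S := by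
  obtain ⟨F, hF₀, F_eq, hF⟩ :=
    exists_seq_isIntegralCurveOn_Icc_of_forall_exists_Icc hτ.le hstep hx
  let N : ℝ → ℕ := fun t => ⌊t / τ⌋₊ + 1
  have lt_N (t : ℝ) : t < N t * τ := by
    rw [← div_lt_iff₀ hτ]
    exact_mod_cast Nat.lt_floor_add_one (t / τ)
  have eqOn_F (t : ℝ) : EqOn (fun u => F (N u) u) (F (N t)) (Icc 0 (N t * τ)) := by
    intro u hu
    rcases le_total (N u) (N t) with h | h
    · exact (F_eq _ _ h u (lt_N u).le).symm
    · exact F_eq _ _ h u hu.2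
  refine ⟨fun t => F (N t) t, (F_eq 0 (N 0) (Nat.zero_le _) 0 (by simp)).trans hF₀,
    fun t ht => ?_, fun t ht => (hF (N t)).2 ⟨ht, (lt_N t).le⟩⟩
  have ht' : t ∈ Icc 0 (N t * τ) := ⟨ht, (lt_N t).le⟩
  have hnhds : Icc 0 (N t * τ) ∈ 𝓝[Ici 0] t :=
    mem_of_superset (inter_mem_nhdsWithin _ (Iio_mem_nhds (lt_N t))) fun u hu => ⟨hu.1, hu.2.le⟩
  exact (((hF (N t)).1 t ht').congr (eqOn_F t) (eqOn_F t ht')).mono_of_mem_nhdsWithin hnhds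

end IntegralCurves

section Game

variable {n : ℕ} {m : Fin n → ℕ}

theorem unitVec_eq_single {M : ℕ} (ℓ : Fin M) : unitVec ℓ = Pi.single ℓ 1 := by
  ext k
  simp [unitVec, Pi.single_apply]

theorem isSimplex_unitVec {M : ℕ} (ℓ : Fin M) : IsSimplex (unitVec ℓ) :=
  unitVec_eq_single ℓ ▸ single_mem_stdSimplex ℝ ℓ

theorem convex_setOf_inK : Convex ℝ {Q : ∀ i, Fin (m i) → ℝ | InK Q} := by
  simpa [InK, IsSimplex, Set.pi, stdSimplex] using
    convex_pi (s := univ) fun i _ => convex_stdSimplex ℝ (Fin (m i))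

theorem InK.apply_le_one {Q : ∀ i, Fin (m i) → ℝ} (hQ : InK Q) (i : Fin n) (ℓ : Fin (m i)) :
    Q i ℓ ≤ 1 :=
  (mem_Icc_of_mem_stdSimplex (hQ i) ℓ).2

theorem InK.norm_le_one {Q : ∀ i, Fin (m i) → ℝ} (hQ : InK Q) : ‖Q‖ ≤ 1 :=
  (pi_norm_le_iff_of_nonneg zero_le_one).2 fun i =>
    (pi_norm_le_iff_of_nonneg zero_le_one).2 fun ℓ => by
      rw [Real.norm_eq_abs, abs_le]
      constructor <;> linarith [(hQ i).1 ℓ, hQ.apply_le_one i ℓ]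

theorem InK.dist_le_one {Q Q' : ∀ i, Fin (m i) → ℝ} (hQ : InK Q) (hQ' : InK Q') :
    dist Q Q' ≤ 1 :=
  (dist_pi_le_iff zero_le_one).2 fun i => (dist_pi_le_iff zero_le_one).2 fun ℓ => by
    rw [Real.dist_eq, abs_le]
    constructor <;> linarith [(hQ i).1 ℓ, hQ.apply_le_one i ℓ, (hQ' i).1 ℓ, hQ'.apply_le_one i ℓ]

theorem InK.update {Q : ∀ i, Fin (m i) → ℝ} (hQ : InK Q) {i : Fin n} {q : Fin (m i) → ℝ}
    (hq : IsSimplex q) : InK (Function.update Q i q) := by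
  intro j
  rcases eq_or_ne j i with rfl | hj
  · simpa using hq
  · simpa [Function.update_of_ne hj] using hQ j

theorem InK.exists_dist_le_apply_ge {Q : ∀ i, Fin (m i) → ℝ} (hQ : InK Q) (i : Fin n)
    (ℓ : Fin (m i)) {ε : ℝ} (hε₀ : 0 ≤ ε) (hε₁ : ε ≤ 1) :
    ∃ Q', InK Q' ∧ dist Q' Q ≤ ε ∧ ε ≤ Q' i ℓ := by
  set P := Function.update Q i (unitVec ℓ)
  have hP : InK P := hQ.update (isSimplex_unitVec ℓ)
  refine ⟨AffineMap.lineMap Q P ε, convex_setOf_inK.lineMap_mem hQ hP ⟨hε₀, hε₁⟩, ?_, ?_⟩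
  · rw [dist_lineMap_left, Real.norm_of_nonneg hε₀]
    exact mul_le_of_le_one_right hε₀ (hQ.dist_le_one hP)
  · have h := (hQ i).1 ℓ
    simp only [AffineMap.lineMap_apply_module, Pi.add_apply, Pi.smul_apply, smul_eq_mul, P,
      Function.update_self, unitVec, if_pos]
    nlinarith

theorem mixedExt_update (c : (∀ j, Fin (m j)) → ℝ) (Q : ∀ i, Fin (m i) → ℝ) (i : Fin n)
    (q : Fin (m i) → ℝ) :
    mixedExt c (Function.update Q i q)
      = ∑ ℓ, q ℓ * mixedExt c (Function.update Q i (unitVec ℓ)) := by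
  have hprod (v : Fin (m i) → ℝ) (s : ∀ j, Fin (m j)) :
      ∏ j, Function.update Q i v j (s j) = v (s i) * ∏ j ∈ univ.erase i, Q j (s j) := by
    rw [← Finset.mul_prod_erase _ _ (mem_univ i), Function.update_self]
    congr 1
    exact Finset.prod_congr rfl fun j hj => by rw [Function.update_of_ne (ne_of_mem_erase hj)]
  simp only [mixedExt, hprod, Finset.mul_sum]
  rw [Finset.sum_comm]
  refine Finset.sum_congr rfl fun s _ => ?_
  rw [Finset.sum_eq_single (s i) (fun ℓ _ hℓ => by simp [unitVec, Ne.symm hℓ]) (by simp)]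
  simp only [unitVec, if_pos]
  ring

theorem mixedExt_eq_sum (c : (∀ j, Fin (m j)) → ℝ) (Q : ∀ i, Fin (m i) → ℝ) (i : Fin n) :
    mixedExt c Q = ∑ ℓ, Q i ℓ * mixedExt c (Function.update Q i (unitVec ℓ)) := by
  conv_lhs => rw [← Function.update_eq_self i Q]
  exact mixedExt_update c Q i (Q i)

variable (c : ∀ _i : Fin n, (∀ j, Fin (m j)) → ℝ) (p : Fin n → ℝ)

noncomputable def costGap (Q : ∀ i, Fin (m i) → ℝ) (i : Fin n) (ℓ : Fin (m i)) : ℝ :=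
  mixedExt (c i) (Function.update Q i (unitVec ℓ)) - mixedExt (c i) Q

theorem repl_eq_mul_costGap (Q : ∀ i, Fin (m i) → ℝ) (i : Fin n) (ℓ : Fin (m i)) :
    repl c p Q i ℓ = Q i ℓ * (-p i * costGap c Q i ℓ) := by
  rw [repl, costGap]
  ring

theorem exists_costGap_neg_of_not_isNash {Q : ∀ i, Fin (m i) → ℝ} (h : ¬IsNash c Q) :
    ∃ i ℓ, costGap c Q i ℓ < 0 := by
  by_contra! hgap
  refine h fun i q hq => ?_
  calc mixedExt (c i) Q = ∑ ℓ, q ℓ * mixedExt (c i) Q := by rw [← Finset.sum_mul, hq.2, one_mul]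
    _ ≤ ∑ ℓ, q ℓ * mixedExt (c i) (Function.update Q i (unitVec ℓ)) :=
      Finset.sum_le_sum fun ℓ _ =>
        mul_le_mul_of_nonneg_left (sub_nonneg.1 (hgap i ℓ)) (hq.1 ℓ)
    _ = mixedExt (c i) (Function.update Q i q) := (mixedExt_update _ Q i q).symm

theorem sum_repl (Q : ∀ i, Fin (m i) → ℝ) (i : Fin n) :
    ∑ ℓ, repl c p Q i ℓ = -(1 - ∑ ℓ, Q i ℓ) * (p i * mixedExt (c i) Q) := by
  have h := mixedExt_eq_sum (c i) Q i
  simp only [repl, mul_sub, Finset.sum_sub_distrib, mul_assoc, ← Finset.mul_sum,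
    ← Finset.sum_mul, ← h]
  ring

end Game

section Replicator

variable {n : ℕ} {m : Fin n → ℕ} (c : ∀ _i : Fin n, (∀ j, Fin (m j)) → ℝ) (p : Fin n → ℝ)
  {k : WithTop ℕ∞}

theorem contDiff_mixedExt (c' : (∀ j, Fin (m j)) → ℝ) : ContDiff ℝ k (mixedExt c') :=
  ContDiff.sum fun s _ =>
    (contDiff_prod fun j _ => contDiff_pi.1 (contDiff_pi.1 contDiff_id j) (s j)).mul contDiff_const

theorem contDiff_update_const (i : Fin n) (v : Fin (m i) → ℝ) :
    ContDiff ℝ k fun Q : ∀ i, Fin (m i) → ℝ => Function.update Q i v := by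
  refine contDiff_pi.2 fun j => ?_
  rcases eq_or_ne j i with rfl | h
  · simpa using contDiff_const
  · simpa [Function.update_of_ne h] using contDiff_pi.1 contDiff_id j

theorem contDiff_costGap (i : Fin n) (ℓ : Fin (m i)) :
    ContDiff ℝ k fun Q => costGap c Q i ℓ :=
  ((contDiff_mixedExt _).comp (contDiff_update_const i _)).sub (contDiff_mixedExt _)

theorem contDiff_repl : ContDiff ℝ k (repl c p) := by
  refine contDiff_pi.2 fun i => contDiff_pi.2 fun ℓ => ?_
  simp only [repl_eq_mul_costGap]
  exact (contDiff_pi.1 (contDiff_pi.1 contDiff_id i) ℓ).mul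
    (contDiff_const.mul (contDiff_costGap c i ℓ))

theorem HasDerivWithinAt.apply_apply {ι : Type*} [Fintype ι] {κ : ι → Type*}
    [∀ i, Fintype (κ i)] {f : ℝ → ∀ i, κ i → ℝ} {f' : ∀ i, κ i → ℝ} {s : Set ℝ} {t : ℝ}
    (h : HasDerivWithinAt f f' s t) (i : ι) (j : κ i) :
    HasDerivWithinAt (fun u => f u i j) (f' i j) s t :=
  hasDerivWithinAt_pi.1 (hasDerivWithinAt_pi.1 h i) j

theorem IsIntegralCurveOn.hasDerivWithinAt_repl_apply {f : ℝ → ∀ i, Fin (m i) → ℝ}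
    {s : Set ℝ} (hf : IsIntegralCurveOn f (fun _ => repl c p) s) {t : ℝ} (ht : t ∈ s)
    (i : Fin n) (ℓ : Fin (m i)) :
    HasDerivWithinAt (fun u => f u i ℓ) (f t i ℓ * (-p i * costGap c (f t) i ℓ)) s t := by
  simpa only [repl_eq_mul_costGap] using (hf t ht).apply_apply i ℓ

theorem IsIntegralCurveOn.mapsTo_inK {f : ℝ → ∀ i, Fin (m i) → ℝ} {a b : ℝ} (hab : a ≤ b)
    (hf : IsIntegralCurveOn f (fun _ => repl c p) (Icc a b)) (ha : InK (f a)) :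
    MapsTo f (Icc a b) {Q | InK Q} := by
  have hfc := hf.continuousOn
  intro t ht i
  refine ⟨fun ℓ => ?_, ?_⟩
  · exact nonneg_of_hasDerivWithinAt_mul hab
      (continuousOn_const.mul ((contDiff_costGap c i ℓ (k := 0)).continuous.comp_continuousOn hfc))
      (fun u hu => hf.hasDerivWithinAt_repl_apply c p hu i ℓ) ((ha i).1 ℓ) t ht
  · -- The defect `1 - ∑ ℓ, f u i ℓ` solves a linear equation, so it stays zero.
    have hdefect : ∀ u ∈ Icc a b, HasDerivWithinAt (fun v => 1 - ∑ ℓ, f v i ℓ)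
        ((1 - ∑ ℓ, f u i ℓ) * (p i * mixedExt (c i) (f u))) (Icc a b) u := by
      intro u hu
      have h := (HasDerivWithinAt.fun_sum (u := univ) fun ℓ _ =>
        (hf u hu).apply_apply i ℓ).const_sub 1
      rwa [sum_repl, neg_mul, neg_neg] at h
    have h := eq_zero_of_hasDerivWithinAt_mul hab
      (continuousOn_const.mul ((contDiff_mixedExt (k := 0) _).continuous.comp_continuousOn hfc))
      hdefect (by simp [(ha i).2]) t ht
    exact (sub_eq_zero.1 h).symm

theorem exists_isIntegralCurveOn_repl_Ici {Q₀ : ∀ i, Fin (m i) → ℝ} (h₀ : InK Q₀) :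
    ∃ Q : ℝ → ∀ i, Fin (m i) → ℝ, Q 0 = Q₀ ∧ IsIntegralCurveOn Q (fun _ => repl c p) (Ici 0) ∧
      MapsTo Q (Ici 0) {Q | InK Q} := by
  obtain ⟨τ, hτ, hloc⟩ :=
    (contDiff_repl c p (k := 1)).locallyLipschitz.exists_pos_forall_exists_isIntegralCurveOn_Icc 1
  refine exists_isIntegralCurveOn_Ici_of_forall_exists_Icc hτ (fun a x hx => ?_) h₀
  obtain ⟨f, hfa, hf⟩ := hloc a x (mem_closedBall_zero_iff.2 (by simpa using hx.norm_le_one))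
  exact ⟨f, hfa, hf, hf.mapsTo_inK c p (by linarith) (hfa ▸ hx)⟩

theorem IsIntegralCurveOn.mul_exp_le_of_costGap_le {Q : ℝ → ∀ i, Fin (m i) → ℝ} {i : Fin n}
    {ℓ : Fin (m i)} {δ : ℝ} (hp : 0 < p i) (hQ : IsIntegralCurveOn Q (fun _ => repl c p) (Ici 0))
    (hQ₀ : 0 ≤ Q 0 i ℓ) (hgap : ∀ t, 0 ≤ t → costGap c (Q t) i ℓ ≤ -δ) {T : ℝ} (hT : 0 ≤ T) :
    Q 0 i ℓ * Real.exp (p i * δ * T) ≤ Q T i ℓ := by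
  have hQT := hQ.mono (Icc_subset_Ici_self : Icc 0 T ⊆ Ici 0)
  simpa using mul_exp_le_of_hasDerivWithinAt_mul (g := fun u => -p i * costGap c (Q u) i ℓ) hT
    (continuousOn_const.mul ((contDiff_costGap c i ℓ (k := 0)).continuous.comp_continuousOn
      hQT.continuousOn))
    (fun u hu => hQT.hasDerivWithinAt_repl_apply c p hu i ℓ) hQ₀
    (fun u hu => by nlinarith [hgap u hu.1]) T ⟨hT, le_rfl⟩

theorem IsIntegralCurveOn.apply_eq_zero_of_costGap_le {Q : ℝ → ∀ i, Fin (m i) → ℝ} {i : Fin n}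
    {ℓ : Fin (m i)} {δ : ℝ} (hp : 0 < p i) (hδ : 0 < δ)
    (hQ : IsIntegralCurveOn Q (fun _ => repl c p) (Ici 0)) (hQK : MapsTo Q (Ici 0) {Q | InK Q})
    (hgap : ∀ t, 0 ≤ t → costGap c (Q t) i ℓ ≤ -δ) :
    Q 0 i ℓ = 0 := by
  have hQ₀ : 0 ≤ Q 0 i ℓ := (hQK self_mem_Ici i).1 ℓ
  refine le_antisymm ?_ hQ₀
  by_contra! hpos
  set T := 1 / (Q 0 i ℓ * (p i * δ))
  have hT : 0 ≤ T := by positivity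
  have hgrowth := hQ.mul_exp_le_of_costGap_le c p hp hQ₀ hgap hT
  have hexp := Real.add_one_le_exp (p i * δ * T)
  have hone : Q 0 i ℓ * (p i * δ * T) = 1 := by
    simp only [T]
    field_simp
  nlinarith [(hQK hT).apply_le_one i ℓ]

end Replicator

theorem stable_stationary_is_nash_general {n : ℕ} {m : Fin n → ℕ}
    (c : ∀ _i : Fin n, (∀ j, Fin (m j)) → ℝ)
    (p : Fin n → ℝ) (hp : ∀ i, 0 < p i)
    (Qs : ∀ i, Fin (m i) → ℝ) (hK : InK Qs)
    (hstable : ∀ U ∈ nhds Qs, ∃ V ∈ nhds Qs,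
      ∀ Q : ℝ → ∀ i, Fin (m i) → ℝ,
        (∀ t, 0 ≤ t → InK (Q t)) →
        (∀ t, 0 ≤ t → ∀ (i : Fin n) (ℓ : Fin (m i)),
          HasDerivWithinAt (fun u => Q u i ℓ) (repl c p (Q t) i ℓ) (Set.Ici 0) t) →
        Q 0 ∈ V → ∀ t, 0 ≤ t → Q t ∈ U) :
    IsNash c Qs := by
  by_contra hnash
  obtain ⟨i, ℓ, hgap⟩ := exists_costGap_neg_of_not_isNash c hnash
  set δ := -costGap c Qs i ℓ / 2
  have hδ : 0 < δ := half_pos (neg_pos.2 hgap)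
  have hU : {Q | costGap c Q i ℓ < -δ} ∈ 𝓝 Qs :=
    (isOpen_lt (contDiff_costGap c i ℓ (k := 0)).continuous continuous_const).mem_nhds
      (by simp only [mem_ofPred_eq, δ]; linarith)
  obtain ⟨V, hV, hstab⟩ := hstable _ hU
  obtain ⟨r, hr, hball⟩ := Metric.mem_nhds_iff.1 hV
  set ε := min (r / 2) 1
  have hε : 0 < ε := lt_min (half_pos hr) one_pos
  obtain ⟨Q₀, hQ₀K, hQ₀dist, hQ₀ℓ⟩ := hK.exists_dist_le_apply_ge i ℓ hε.le (min_le_right _ 1)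
  obtain ⟨Q, rfl, hQ, hQK⟩ := exists_isIntegralCurveOn_repl_Ici c p hQ₀K
  have hstay := hstab Q (fun t ht => hQK ht) (fun t ht => (hQ t ht).apply_apply)
    (hball (hQ₀dist.trans_lt ((min_le_left _ _).trans_lt (half_lt_self hr))))
  have hzero := hQ.apply_eq_zero_of_costGap_le c p (hp i) hδ hQK fun t ht => (hstay t ht).le
  linarith

/-- every Lyapunov-stable stationary point of the multipopulation
replicator dynamics is a Nash equilibrium. -/
theorem stable_stationary_is_nash {n : ℕ} {m : Fin n → ℕ}
    (c : ∀ _i : Fin n, (∀ j, Fin (m j)) → ℝ)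
    (p : Fin n → ℝ) (hp : ∀ i, 0 < p i)
    (Qs : ∀ i, Fin (m i) → ℝ) (hK : InK Qs)
    (hstat : ∀ (i : Fin n) (ℓ : Fin (m i)), repl c p Qs i ℓ = 0)
    (hstable : ∀ U ∈ nhds Qs, ∃ V ∈ nhds Qs,
      ∀ Q : ℝ → ∀ i, Fin (m i) → ℝ,
        (∀ t, 0 ≤ t → InK (Q t)) →
        (∀ t, 0 ≤ t → ∀ (i : Fin n) (ℓ : Fin (m i)),
          HasDerivWithinAt (fun u => Q u i ℓ) (repl c p (Q t) i ℓ) (Set.Ici 0) t) →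
        Q 0 ∈ V → ∀ t, 0 ≤ t → Q t ∈ U) :
    IsNash c Qs :=
  stable_stationary_is_nash_general c p hp Qs hK hstable
end

section
/- Exponential escape from non-Nash points: let t ↦ Q(t) ∈ K be differentiable on [0,T] with Q'(t) = G(Q(t)) for all t ∈ [0,T], and suppose that for some player i, some pure strategy ℓ and some ε > 0 one has ū_i(q_i(t), Q_{-i}(t)) - ū_i(e_ℓ, Q_{-i}(t)) ≥ ε for all t ∈ [0,T]. Then q_{i,ℓ}(t) ≥ q_{i,ℓ}(0) · exp(p_i ε t) for all t ∈ [0,T]. -/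
/-!
Along the solution, `q_{i,ℓ}' = p_i q_{i,ℓ} (ū_i(q_i, Q_{-i}) - ū_i(e_ℓ, Q_{-i})) ≥ p_i ε q_{i,ℓ}`
because `q_{i,ℓ} ≥ 0`. A linear differential inequality `f' ≥ a f` makes `e^{-a t} f(t)`
nondecreasing, which is the exponential lower bound.
-/

open Finset

open Set Real

theorem monotoneOn_exp_neg_mul_of_mul_le_deriv {f f' : ℝ → ℝ} {a t₀ T : ℝ}
    (hf : ∀ u ∈ Icc t₀ T, HasDerivWithinAt f (f' u) (Icc t₀ T) u)
    (hle : ∀ u ∈ Icc t₀ T, a * f u ≤ f' u) :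
    MonotoneOn (fun u => exp (-a * u) * f u) (Icc t₀ T) := by
  have hderiv : ∀ u ∈ Icc t₀ T, HasDerivWithinAt (fun u => exp (-a * u) * f u)
      (exp (-a * u) * (f' u - a * f u)) (Icc t₀ T) u := by
    intro u hu
    have hexp : HasDerivWithinAt (fun u => exp (-a * u)) (exp (-a * u) * -a) (Icc t₀ T) u := by
      simpa using ((hasDerivAt_id u).const_mul (-a)).exp.hasDerivWithinAt
    exact (hexp.mul (hf u hu)).congr_deriv (by ring)
  refine monotoneOn_of_hasDerivWithinAt_nonneg (convex_Icc t₀ T)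
    (fun u hu => (hderiv u hu).continuousWithinAt)
    (fun u hu => (hderiv u (interior_subset hu)).mono interior_subset) fun u hu => ?_
  have := hle u (interior_subset hu)
  exact mul_nonneg (exp_pos _).le (by linarith)

theorem mul_exp_le_of_mul_le_deriv {f f' : ℝ → ℝ} {a t₀ T : ℝ}
    (hf : ∀ u ∈ Icc t₀ T, HasDerivWithinAt f (f' u) (Icc t₀ T) u)
    (hle : ∀ u ∈ Icc t₀ T, a * f u ≤ f' u) :
    ∀ t ∈ Icc t₀ T, f t₀ * exp (a * (t - t₀)) ≤ f t := by
  intro t ht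
  have hmono := monotoneOn_exp_neg_mul_of_mul_le_deriv hf hle
    ⟨le_rfl, ht.1.trans ht.2⟩ ht ht.1
  have hscaled := mul_le_mul_of_nonneg_left hmono (exp_pos (a * t)).le
  calc f t₀ * exp (a * (t - t₀)) = exp (a * t) * (exp (-a * t₀) * f t₀) := by
        rw [mul_sub, sub_eq_add_neg, exp_add, neg_mul]; ring
    _ ≤ exp (a * t) * (exp (-a * t) * f t) := hscaled
    _ = f t := by rw [← mul_assoc, ← exp_add]; simp

theorem mul_mul_le_repl {n : ℕ} {m : Fin n → ℕ} (c : ∀ _i : Fin n, (∀ j, Fin (m j)) → ℝ)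
    (p : Fin n → ℝ) (Q : ∀ i, Fin (m i) → ℝ) (i : Fin n) (ℓ : Fin (m i)) {ε : ℝ}
    (hp : 0 ≤ p i) (hq : 0 ≤ Q i ℓ)
    (hgap : ε ≤ mixedExt (c i) Q - mixedExt (c i) (Function.update Q i (unitVec ℓ))) :
    p i * ε * Q i ℓ ≤ repl c p Q i ℓ := by
  have := mul_le_mul_of_nonneg_left hgap (mul_nonneg hp hq)
  unfold repl
  linarith

theorem exponential_escape_general {n : ℕ} {m : Fin n → ℕ}
    (c : ∀ _i : Fin n, (∀ j, Fin (m j)) → ℝ)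
    (p : Fin n → ℝ) (hp : ∀ i, 0 < p i)
    (T : ℝ)
    (Q : ℝ → ∀ i, Fin (m i) → ℝ)
    (hKt : ∀ t ∈ Set.Icc (0:ℝ) T, InK (Q t))
    (hderiv : ∀ t ∈ Set.Icc (0:ℝ) T, ∀ (i : Fin n) (ℓ : Fin (m i)),
      HasDerivWithinAt (fun u => Q u i ℓ) (repl c p (Q t) i ℓ) (Set.Icc (0:ℝ) T) t)
    (i : Fin n) (ℓ : Fin (m i)) (ε : ℝ)
    (hgap : ∀ t ∈ Set.Icc (0:ℝ) T,
      ε ≤ mixedExt (c i) (Q t) - mixedExt (c i) (Function.update (Q t) i (unitVec ℓ))) :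
    ∀ t ∈ Set.Icc (0:ℝ) T, Q 0 i ℓ * Real.exp (p i * ε * t) ≤ Q t i ℓ := by
  intro t ht
  simpa using mul_exp_le_of_mul_le_deriv (fun u hu => hderiv u hu i ℓ)
    (fun u hu => mul_mul_le_repl c p (Q u) i ℓ (hp i).le ((hKt u hu i).1 ℓ) (hgap u hu)) t ht

/-- exponential escape from non-Nash points: along a solution of
the replicator dynamics on `[0,T]`, if strategy `ℓ` outperforms `q_i` by at
least `ε`, then `q_{i,ℓ}(t) ≥ q_{i,ℓ}(0) · exp(p_i ε t)`. -/
theorem exponential_escape {n : ℕ} {m : Fin n → ℕ}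
    (c : ∀ _i : Fin n, (∀ j, Fin (m j)) → ℝ)
    (p : Fin n → ℝ) (hp : ∀ i, 0 < p i)
    (T : ℝ) (hT : 0 ≤ T)
    (Q : ℝ → ∀ i, Fin (m i) → ℝ)
    (hKt : ∀ t ∈ Set.Icc (0:ℝ) T, InK (Q t))
    (hderiv : ∀ t ∈ Set.Icc (0:ℝ) T, ∀ (i : Fin n) (ℓ : Fin (m i)),
      HasDerivWithinAt (fun u => Q u i ℓ) (repl c p (Q t) i ℓ) (Set.Icc (0:ℝ) T) t)
    (i : Fin n) (ℓ : Fin (m i)) (ε : ℝ) (hε : 0 < ε)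
    (hgap : ∀ t ∈ Set.Icc (0:ℝ) T,
      ε ≤ mixedExt (c i) (Q t) - mixedExt (c i) (Function.update (Q t) i (unitVec ℓ))) :
    ∀ t ∈ Set.Icc (0:ℝ) T, Q 0 i ℓ * Real.exp (p i * ε * t) ≤ Q t i ℓ :=
  exponential_escape_general c p hp T Q hKt hderiv i ℓ ε hgap
end

section
/- Every finite ordinal potential game has a pure Nash equilibrium: there exists a pure strategy profile s ∈ ∏_j {1,…,m_j} such that for every player i and every pure strategy ℓ of player i, c_i(s) ≤ c_i(ℓ, s_{-i}). -/
/-- every finite ordinal potential game has a pure Nash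
equilibrium: a pure profile `s` such that no player can strictly decrease her
cost by a unilateral pure deviation. -/
theorem ordinal_potential_has_pure_nash {n : ℕ} {m : Fin n → ℕ}
    (hm : ∀ i, 0 < m i)
    (c : ∀ _i : Fin n, (∀ j, Fin (m j)) → ℝ)
    (φ : (∀ j, Fin (m j)) → ℝ)
    (hord : ∀ (i : Fin n) (s : ∀ j, Fin (m j)) (ℓ ℓ' : Fin (m i)),
      0 < c i (Function.update s i ℓ) - c i (Function.update s i ℓ') ↔
      0 < φ (Function.update s i ℓ) - φ (Function.update s i ℓ')) :
    ∃ s : ∀ j, Fin (m j), ∀ (i : Fin n) (ℓ : Fin (m i)),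
      c i s ≤ c i (Function.update s i ℓ) := by
  have hne : Nonempty (∀ j, Fin (m j)) := ⟨fun j => ⟨0, hm j⟩⟩
  obtain ⟨s, hs⟩ := Finite.exists_min φ
  refine ⟨s, fun i ℓ => ?_⟩
  by_contra h
  push_neg at h
  have h1 : 0 < c i (Function.update s i (s i)) - c i (Function.update s i ℓ) := by
    rw [Function.update_eq_self]; linarith
  have h2 := (hord i s (s i) ℓ).mp h1
  rw [Function.update_eq_self] at h2
  have := hs (Function.update s i ℓ)
  linarith
end
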